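/- arXiv:1901.04389 — 7 statements merged into one kernel-verified Lean document; each statement's English description precedes it below -/
import Mathlib

section
/- Let V ⊆ ℂ^m ⊗ ℂ^n be an EB space, let W be an arbitrary m'×m complex matrix, and let U be an n×n unitary matrix. Then the subspace (W ⊗ U)V = {(W ⊗ U)v : v ∈ V} of ℂ^{m'} ⊗ ℂ^n is an EB space. Conversely, if m' = m, W is invertible, U is unitary, and (W ⊗ U)V is an EB space, then V is an EB space. -/
open scoped BigOperators ComplexOrder
open Kronecker

noncomputable section

/-- The `j`-th standard basis vector of `ℂ^q` (zero if `j ≥ q`). -/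
def ee (q : ℕ) (j : ℕ) : Fin q → ℂ := fun b => if (b : ℕ) = j then 1 else 0

/-- Tensor (Kronecker) product of two vectors. -/
def tens {A B : Type*} (x : A → ℂ) (y : B → ℂ) : A × B → ℂ := fun p => x p.1 * y p.2

/-- A matrix on `ℂ^A ⊗ ℂ^B` is separable if it is a finite sum of Kronecker products of
rank-one positive semidefinite matrices. -/
def IsSep {A B : Type*} (ρ : Matrix (A × B) (A × B) ℂ) : Prop :=
  ∃ (T : ℕ) (x : Fin T → A → ℂ) (y : Fin T → B → ℂ),
    ρ = ∑ t : Fin T, Matrix.of (fun p q : A × B =>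
      (x t p.1 * (starRingEnd ℂ) (x t q.1)) * (y t p.2 * (starRingEnd ℂ) (y t q.2)))

/-- Partial trace over the middle (B) system of the rank-one projection `|Ψ⟩⟨Ψ|`. -/
def TrB {A B : Type*} [Fintype B] {k : ℕ} (Ψ : A × B × Fin k → ℂ) :
    Matrix (A × Fin k) (A × Fin k) ℂ :=
  Matrix.of fun p q => ∑ b : B, Ψ (p.1, b, p.2) * (starRingEnd ℂ) (Ψ (q.1, b, q.2))

/-- A subspace `V ⊆ ℂ^A ⊗ ℂ^B` is entanglement breaking if for every ancilla dimension
`k ≥ 1` and every `Ψ` whose slices all lie in `V`, the matrix `Tr_B |Ψ⟩⟨Ψ|` is separable. -/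
def IsEBSpace {A B : Type*} [Fintype B] (V : Submodule ℂ (A × B → ℂ)) : Prop :=
  ∀ (k : ℕ), 1 ≤ k → ∀ Ψ : A × B × Fin k → ℂ,
    (∀ ℓ : Fin k, (fun ab : A × B => Ψ (ab.1, ab.2, ℓ)) ∈ V) → IsSep (TrB Ψ)

/-- Partial transpose on the B system. -/
def PT {A B : Type*} (ρ : Matrix (A × B) (A × B) ℂ) : Matrix (A × B) (A × B) ℂ :=
  Matrix.of fun p q => ρ (p.1, q.2) (q.1, p.2)

/-- Partial trace over the B system of a matrix. -/
def trBmat {A B : Type*} [Fintype B] (ρ : Matrix (A × B) (A × B) ℂ) : Matrix A A ℂ :=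
  Matrix.of fun a a' => ∑ b : B, ρ (a, b) (a', b)

/-- Partial trace over the A system of a matrix. -/
def trAmat {A B : Type*} [Fintype A] (ρ : Matrix (A × B) (A × B) ℂ) : Matrix B B ℂ :=
  Matrix.of fun b b' => ∑ a : A, ρ (a, b) (a, b')

/-! Writing `Ψ` as an operator `M : ℂ^B → ℂ^A ⊗ ℂ^k`, one has `Tr_B |Ψ⟩⟨Ψ| = M M†`. Applying
`W ⊗ U` to every slice of `Ψ` turns `M` into `(W ⊗ 1) M Uᵀ`, and `Uᵀ` cancels in `M M†` because `U`
is unitary. Hence `Tr_B` only gets conjugated by the local operator `W ⊗ 1`, which maps each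
product term `(x x†) ⊗ (y y†)` to `(Wx)(Wx)† ⊗ (y y†)` and so preserves separability. The converse
applies this to `W⁻¹` and `U†`. -/

section

open Matrix

variable {A A' B C : Type*}

def reshapeMid (Ψ : A × B × C → ℂ) : Matrix (A × C) B ℂ :=
  Matrix.of fun p b => Ψ (p.1, b, p.2)

lemma TrB_eq_reshapeMid_mul_conjTranspose [Fintype B] {k : ℕ} (Ψ : A × B × Fin k → ℂ) :
    TrB Ψ = reshapeMid Ψ * (reshapeMid Ψ)ᴴ :=
  rfl

lemma reshapeMid_eq_of_kronecker_mulVec [Fintype A] [Fintype B] [Fintype C] [DecidableEq C]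
    (W : Matrix A' A ℂ) (U : Matrix B B ℂ) {Ψ : A × B × C → ℂ} {Ψ' : A' × B × C → ℂ}
    (h : ∀ c, (fun ab : A' × B => Ψ' (ab.1, ab.2, c)) = (W ⊗ₖ U) *ᵥ fun ab => Ψ (ab.1, ab.2, c)) :
    reshapeMid Ψ' = W ⊗ₖ (1 : Matrix C C ℂ) * reshapeMid Ψ * Uᵀ := by
  ext p b
  have hΨ' : Ψ' (p.1, b, p.2) = ((W ⊗ₖ U) *ᵥ fun ab => Ψ (ab.1, ab.2, p.2)) (p.1, b) :=
    congrFun (h p.2) (p.1, b)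
  simp only [reshapeMid, of_apply, hΨ', mul_apply, mulVec, dotProduct, Fintype.sum_prod_type,
    kroneckerMap_apply, one_apply, transpose_apply, mul_ite, mul_one, mul_zero, ite_mul, zero_mul,
    Finset.sum_ite_eq, Finset.mem_univ, if_true, Finset.sum_mul]
  rw [Finset.sum_comm]
  exact Finset.sum_congr rfl fun _ _ => Finset.sum_congr rfl fun _ _ => by ring

lemma kronecker_mulVec_tens [Fintype A] [Fintype B] (W : Matrix A' A ℂ) (U : Matrix C B ℂ)
    (x : A → ℂ) (y : B → ℂ) : (W ⊗ₖ U) *ᵥ tens x y = tens (W *ᵥ x) (U *ᵥ y) := by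
  ext p
  simp only [tens, mulVec, dotProduct, Fintype.sum_prod_type, Finset.sum_mul, Finset.mul_sum,
    kroneckerMap_apply]
  rw [Finset.sum_comm]
  exact Finset.sum_congr rfl fun _ _ => Finset.sum_congr rfl fun _ _ => by ring

lemma of_rankOne_eq_vecMulVec_tens (x : A → ℂ) (y : B → ℂ) :
    Matrix.of (fun p q : A × B =>
      (x p.1 * (starRingEnd ℂ) (x q.1)) * (y p.2 * (starRingEnd ℂ) (y q.2))) =
      vecMulVec (tens x y) (star (tens x y)) := by
  ext p q
  simp only [tens, of_apply, vecMulVec_apply, Pi.star_apply, star_mul', RCLike.star_def]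
  ring

lemma IsSep.kronecker_one_conj [Fintype A] [Fintype B] [DecidableEq B] (W : Matrix A' A ℂ)
    {ρ : Matrix (A × B) (A × B) ℂ} (h : IsSep ρ) :
    IsSep (W ⊗ₖ (1 : Matrix B B ℂ) * ρ * (Wᴴ ⊗ₖ (1 : Matrix B B ℂ))) := by
  obtain ⟨T, x, y, rfl⟩ := h
  refine ⟨T, fun t => W *ᵥ x t, y, ?_⟩
  rw [← conjTranspose_one, ← conjTranspose_kronecker, Matrix.mul_sum, Matrix.sum_mul]
  simp only [of_rankOne_eq_vecMulVec_tens, mul_vecMulVec, vecMulVec_mul, vecMul_conjTranspose,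
    star_star, kronecker_mulVec_tens, conjTranspose_one, one_mulVec]

lemma TrB_eq_of_kronecker_mulVec [Fintype A] [Fintype B] [DecidableEq B] {k : ℕ}
    (W : Matrix A' A ℂ) {U : Matrix B B ℂ} (hU : U ∈ unitaryGroup B ℂ)
    {Ψ : A × B × Fin k → ℂ} {Ψ' : A' × B × Fin k → ℂ}
    (h : ∀ ℓ, (fun ab : A' × B => Ψ' (ab.1, ab.2, ℓ)) = (W ⊗ₖ U) *ᵥ fun ab => Ψ (ab.1, ab.2, ℓ)) :
    TrB Ψ' =
      W ⊗ₖ (1 : Matrix (Fin k) (Fin k) ℂ) * TrB Ψ * (Wᴴ ⊗ₖ (1 : Matrix (Fin k) (Fin k) ℂ)) := by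
  have hUT : Uᵀ * (Uᵀ)ᴴ = 1 := by
    rw [conjTranspose_transpose_eq_transpose_conjTranspose, ← transpose_mul,
      ← star_eq_conjTranspose, mem_unitaryGroup_iff'.mp hU, transpose_one]
  rw [TrB_eq_reshapeMid_mul_conjTranspose, TrB_eq_reshapeMid_mul_conjTranspose,
    reshapeMid_eq_of_kronecker_mulVec W U h]
  simp only [conjTranspose_mul, conjTranspose_kronecker, conjTranspose_one, Matrix.mul_assoc]
  rw [← Matrix.mul_assoc Uᵀ, hUT, Matrix.one_mul]

theorem IsEBSpace.map_kronecker [Fintype A] [Fintype B] [DecidableEq B]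
    {V : Submodule ℂ (A × B → ℂ)} (hV : IsEBSpace V) (W : Matrix A' A ℂ) {U : Matrix B B ℂ}
    (hU : U ∈ unitaryGroup B ℂ) : IsEBSpace (V.map (W ⊗ₖ U).mulVecLin) := by
  intro k hk Ψ' hΨ'
  choose v hvV hv using hΨ'
  let Ψ : A × B × Fin k → ℂ := fun p => v p.2.2 (p.1, p.2.1)
  rw [TrB_eq_of_kronecker_mulVec W hU (Ψ := Ψ) fun ℓ => (hv ℓ).symm]
  exact (hV k hk Ψ hvV).kronecker_one_conj W

theorem IsEBSpace.of_map_kronecker [Fintype A] [DecidableEq A] [Fintype B] [DecidableEq B]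
    {V : Submodule ℂ (A × B → ℂ)} {W : Matrix A A ℂ} (hW : IsUnit W) {U : Matrix B B ℂ}
    (hU : U ∈ unitaryGroup B ℂ) (h : IsEBSpace (V.map (W ⊗ₖ U).mulVecLin)) : IsEBSpace V := by
  have h' := h.map_kronecker W⁻¹ (Unitary.star_mem hU)
  rwa [← Submodule.map_comp, ← mulVecLin_mul, ← mul_kronecker_mul,
    nonsing_inv_mul W ((isUnit_iff_isUnit_det W).mp hW), hU.1, one_kronecker_one,
    mulVecLin_one, Submodule.map_id] at h'

end

/-- `(W ⊗ U)V` is EB whenever `V` is EB, `W` arbitrary and `U` unitary; conversely, if `W` is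
invertible and `U` unitary and `(W ⊗ U)V` is EB, then `V` is EB. -/
theorem eb_map_product :
    (∀ (m m' n : ℕ) (V : Submodule ℂ (Fin m × Fin n → ℂ))
      (W : Matrix (Fin m') (Fin m) ℂ) (U : Matrix (Fin n) (Fin n) ℂ),
        U ∈ Matrix.unitaryGroup (Fin n) ℂ → IsEBSpace V →
          IsEBSpace (Submodule.map (W ⊗ₖ U).mulVecLin V)) ∧
    (∀ (m n : ℕ) (V : Submodule ℂ (Fin m × Fin n → ℂ))
      (W : Matrix (Fin m) (Fin m) ℂ) (U : Matrix (Fin n) (Fin n) ℂ),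
        U ∈ Matrix.unitaryGroup (Fin n) ℂ → IsUnit W →
          IsEBSpace (Submodule.map (W ⊗ₖ U).mulVecLin V) → IsEBSpace V) :=
  ⟨fun _ _ _ _ W _ hU hV => hV.map_kronecker W hU,
    fun _ _ _ _ _ hU hW h => h.of_map_kronecker hW hU⟩
end
end

section
/- Let ρ be a state on ℂ^m ⊗ ℂ^n. If rank ρ < max{rank(Tr_B ρ), rank(Tr_A ρ)}, then ρ is entangled (not separable). -/
open scoped BigOperators ComplexOrder
open Kronecker

noncomputable section

/-! If `ρ = ∑ᵢ (xᵢ xᵢ*) ⊗ (yᵢ yᵢ*)` then `ρ = Z Z*`, where `Z` has the columns `xᵢ ⊗ yᵢ`, so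
`rank ρ = dim span {xᵢ ⊗ yᵢ}`. The columns of `Tr_B ρ = ∑ᵢ ‖yᵢ‖² xᵢ xᵢ*` lie in
`span {xᵢ : yᵢ ≠ 0}`, and a basis `{xᵢ : i ∈ S}` of that span (with `yᵢ ≠ 0` for `i ∈ S`) yields
linearly independent vectors `xᵢ ⊗ yᵢ`. Hence `rank Tr_B ρ ≤ rank ρ`, and `rank Tr_A ρ ≤ rank ρ`
by exchanging the two factors. -/

open Module Submodule Matrix

lemma linearIndependent_tens {ι A B : Type*} {x : ι → A → ℂ} {y : ι → B → ℂ}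
    (hx : LinearIndependent ℂ x) (hy : ∀ i, y i ≠ 0) :
    LinearIndependent ℂ fun i => tens (x i) (y i) := by
  classical
  rw [linearIndependent_iff'] at hx ⊢
  intro s g hg i hi
  obtain ⟨b, hb⟩ := Function.ne_iff.mp (hy i)
  have hslice : ∑ j ∈ s, (g j * y j b) • x j = 0 := by
    funext a
    simpa [Finset.sum_apply, tens, mul_assoc, mul_comm (y _ b)] using congrFun hg (a, b)
  exact (mul_eq_zero.mp (hx s _ hslice i hi)).resolve_right hb

lemma finrank_span_image_le_finrank_span_tens {ι A B : Type*} [Finite ι]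
    (x : ι → A → ℂ) (y : ι → B → ℂ) :
    finrank ℂ (span ℂ (x '' {i | y i ≠ 0})) ≤
      finrank ℂ (span ℂ (Set.range fun i => tens (x i) (y i))) := by
  obtain ⟨s, hs, -, hspan, hli⟩ :=
    exists_linearIndepOn_extension (linearIndepOn_empty ℂ x) (Set.empty_subset {i | y i ≠ 0})
  have := Fintype.ofFinite s
  have := FiniteDimensional.span_of_finite ℂ ((Set.toFinite s).image x)
  have := FiniteDimensional.span_of_finite ℂ (Set.finite_range fun i => tens (x i) (y i))
  have hli' : LinearIndependent ℂ fun i : s => tens (x i) (y i) :=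
    linearIndependent_tens hli fun i => hs i.2
  calc finrank ℂ (span ℂ (x '' {i | y i ≠ 0}))
      ≤ finrank ℂ (span ℂ (x '' s)) := finrank_mono (span_le.2 hspan)
    _ = Fintype.card s := by rw [Set.image_eq_range]; exact finrank_span_eq_card hli
    _ = finrank ℂ (span ℂ (Set.range fun i : s => tens (x i) (y i))) :=
      (finrank_span_eq_card hli').symm
    _ ≤ _ := finrank_mono <|
      span_mono (Set.range_comp_subset_range Subtype.val fun i => tens (x i) (y i))

def sepSum {ι A B : Type*} [Fintype ι] (x : ι → A → ℂ) (y : ι → B → ℂ) :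
    Matrix (A × B) (A × B) ℂ :=
  ∑ i, Matrix.of fun p q : A × B =>
    (x i p.1 * (starRingEnd ℂ) (x i q.1)) * (y i p.2 * (starRingEnd ℂ) (y i q.2))

section sepSum

variable {ι A B : Type*} [Fintype ι] (x : ι → A → ℂ) (y : ι → B → ℂ)

lemma isSep_iff_exists_eq_sepSum {ρ : Matrix (A × B) (A × B) ℂ} :
    IsSep ρ ↔ ∃ (T : ℕ) (x : Fin T → A → ℂ) (y : Fin T → B → ℂ), ρ = sepSum x y :=
  Iff.rfl

lemma sepSum_eq_mul_conjTranspose :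
    sepSum x y = (of fun p i => tens (x i) (y i) p) * (of fun p i => tens (x i) (y i) p)ᴴ := by
  ext p q
  simp only [sepSum, Matrix.sum_apply, mul_apply, of_apply, conjTranspose_apply,
    Complex.star_def, tens, map_mul]
  exact Finset.sum_congr rfl fun i _ => by ring

lemma rank_sepSum [Fintype A] [Fintype B] :
    (sepSum x y).rank = finrank ℂ (span ℂ (Set.range fun i => tens (x i) (y i))) := by
  rw [sepSum_eq_mul_conjTranspose, rank_self_mul_conjTranspose, rank_eq_finrank_span_cols]
  rfl

lemma sepSum_submatrix_swap : (sepSum x y).submatrix Prod.swap Prod.swap = sepSum y x := by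
  ext p q
  simp only [sepSum, submatrix_apply, Matrix.sum_apply, of_apply, Prod.fst_swap, Prod.snd_swap]
  exact Finset.sum_congr rfl fun i _ => mul_comm _ _

lemma rank_trBmat_sepSum_le [Fintype A] [Fintype B] :
    (trBmat (sepSum x y)).rank ≤ finrank ℂ (span ℂ (x '' {i | y i ≠ 0})) := by
  rw [rank_eq_finrank_span_cols]
  refine finrank_mono (span_le.2 ?_)
  rintro _ ⟨a', rfl⟩
  have hcol : (trBmat (sepSum x y)).col a' =
      ∑ i, ((starRingEnd ℂ) (x i a') * ∑ b, y i b * (starRingEnd ℂ) (y i b)) • x i := by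
    funext a
    simp only [col_apply, trBmat, sepSum, of_apply, Matrix.sum_apply, Finset.sum_apply,
      Pi.smul_apply, smul_eq_mul, Finset.mul_sum, Finset.sum_mul]
    rw [Finset.sum_comm]
    exact Finset.sum_congr rfl fun i _ => Finset.sum_congr rfl fun b _ => by ring
  rw [hcol]
  refine sum_mem fun i _ => ?_
  by_cases hi : y i = 0
  · simp [hi]
  · exact smul_mem _ _ (subset_span ⟨i, hi, rfl⟩)

end sepSum

section partialTrace

variable {A B : Type*} {ρ : Matrix (A × B) (A × B) ℂ}

lemma IsSep.rank_trBmat_le [Fintype A] [Fintype B] (hρ : IsSep ρ) : (trBmat ρ).rank ≤ ρ.rank := by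
  obtain ⟨T, x, y, rfl⟩ := isSep_iff_exists_eq_sepSum.1 hρ
  rw [rank_sepSum]
  exact (rank_trBmat_sepSum_le x y).trans (finrank_span_image_le_finrank_span_tens x y)

lemma IsSep.submatrix_swap (hρ : IsSep ρ) : IsSep (ρ.submatrix Prod.swap Prod.swap) := by
  obtain ⟨T, x, y, rfl⟩ := isSep_iff_exists_eq_sepSum.1 hρ
  exact ⟨T, y, x, sepSum_submatrix_swap x y⟩

lemma trAmat_eq_trBmat_submatrix_swap [Fintype A] :
    trAmat ρ = trBmat (ρ.submatrix Prod.swap Prod.swap) :=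
  rfl

lemma IsSep.rank_trAmat_le [Fintype A] [Fintype B] (hρ : IsSep ρ) : (trAmat ρ).rank ≤ ρ.rank := by
  rw [trAmat_eq_trBmat_submatrix_swap]
  refine hρ.submatrix_swap.rank_trBmat_le.trans_eq ?_
  exact rank_submatrix ρ (Equiv.prodComm B A) (Equiv.prodComm B A)

end partialTrace

theorem entangled_of_rank_lt_general {m n : ℕ}
    (ρ : Matrix (Fin m × Fin n) (Fin m × Fin n) ℂ)
    (hrank : ρ.rank < max (trBmat ρ).rank (trAmat ρ).rank) :
    ¬ IsSep ρ := fun hρ =>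
  hrank.not_ge (max_le hρ.rank_trBmat_le hρ.rank_trAmat_le)

/-- An `m × n` state of rank `r` is entangled if `max{rank ρ_A, rank ρ_B} > r`. -/
theorem entangled_of_rank_lt {m n : ℕ}
    (ρ : Matrix (Fin m × Fin n) (Fin m × Fin n) ℂ)
    (hpsd : ρ.PosSemidef) (htr : ρ.trace = 1)
    (hrank : ρ.rank < max (trBmat ρ).rank (trAmat ρ).rank) :
    ¬ IsSep ρ :=
  entangled_of_rank_lt_general ρ hrank
end
end

section
/- For any nonzero vectors a_1, …, a_n ∈ ℂ^m, the subspace of ℂ^m ⊗ ℂ^n spanned by {a_j ⊗ e_j : j = 1,…,n}, where e_1,…,e_n is the standard basis of ℂ^n, is an n-dimensional entanglement-breaking space; in particular the dimension bound n for EB subspaces of ℂ^m ⊗ ℂ^n is attained. -/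
open scoped BigOperators ComplexOrder
open Kronecker

noncomputable section

/-- The subspace spanned by `a_j ⊗ e_j`, `j = 1,…,n`, is an `n`-dimensional EB space,
so the dimension bound `n` for EB subspaces of `ℂ^m ⊗ ℂ^n` is attained. -/
theorem eb_dim_attained {m n : ℕ} (a : Fin n → Fin m → ℂ) (ha : ∀ j, a j ≠ 0) :
    IsEBSpace (Submodule.span ℂ (Set.range fun j : Fin n => tens (a j) (ee n (j : ℕ)))) ∧
    Module.finrank ℂ
      (Submodule.span ℂ (Set.range fun j : Fin n => tens (a j) (ee n (j : ℕ)))) = n := by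
  constructor
  · intro k hk Ψ hΨ
    choose C hC using fun ℓ => (Submodule.mem_span_range_iff_exists_fun ℂ).mp (hΨ ℓ)
    have hΨ' : ∀ (α : Fin m) (b : Fin n) (ℓ : Fin k), Ψ (α, b, ℓ) = C ℓ b * a b α := by
      intro α b ℓ
      have h := congrFun (hC ℓ) (α, b)
      simp only [Finset.sum_apply, Pi.smul_apply, tens, ee, smul_eq_mul, Fin.val_eq_val,
        mul_ite, mul_one, mul_zero] at h
      rw [Finset.sum_ite_eq Finset.univ b (fun j => C ℓ j * a j α)] at h
      simp at h
      rw [← h]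
    refine ⟨n, fun t => a t, fun t ℓ => C ℓ t, ?_⟩
    ext p q
    simp only [TrB, Matrix.of_apply, Matrix.sum_apply, hΨ']
    apply Finset.sum_congr rfl
    intro b _
    simp only [map_mul]
    ring
  · have hli : LinearIndependent ℂ (fun j : Fin n => tens (a j) (ee n (j : ℕ))) := by
      rw [Fintype.linearIndependent_iff]
      intro g hg j
      obtain ⟨α, hα⟩ : ∃ α, a j α ≠ 0 := by
        by_contra h
        push_neg at h
        exact ha j (funext h)
      have h := congrFun hg (α, j)
      simp only [Finset.sum_apply, Pi.smul_apply, tens, ee, smul_eq_mul, Fin.val_eq_val,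
        mul_ite, mul_one, mul_zero, Pi.zero_apply] at h
      rw [Finset.sum_ite_eq Finset.univ j (fun i => g i * a i α)] at h
      simp only [Finset.mem_univ, if_true] at h
      rcases mul_eq_zero.mp h with h' | h'
      · exact h'
      · exact absurd h' hα
    rw [finrank_span_eq_card hli, Fintype.card_fin]
end
end

section
/- A 2-dimensional subspace V ⊆ ℂ^m ⊗ ℂ² is an entanglement-breaking space if and only if there exist vectors x, y ∈ ℂ^m and an orthonormal basis f₀, f₁ of ℂ² such that V = span{x ⊗ f₀, y ⊗ f₁}. -/
open scoped BigOperators ComplexOrder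
open Kronecker

noncomputable section

/-! Write `TrB Ψ = G Gᴴ`, where the columns of `G` are the vectors `Ψ(·, b, ·)`, and a separable
matrix as `P Pᴴ` with product columns `x_t ⊗ u_t`. Equal Gram matrices have equal column spans, so
when `V` is EB the columns of `G` lie in the span of at most `|B| = 2` product vectors; taking the
slices of `Ψ` to be a basis of `V` gives `V = span {x ⊗ f, y ⊗ f'}`. If `x, y` are dependent,
`V = x ⊗ ℂ²`. Otherwise EB applied to the slices `x ⊗ f, y ⊗ f'` forces `⟨f, f'⟩ = 0`: the product
vectors in the range of `TrB Ψ` lie in `span {x ⊗ e₀, y ⊗ e₁}`, so their off-diagonal ancilla block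
vanishes, while that block of `TrB Ψ` is `⟨f', f⟩ x yᴴ`. Conversely, for orthonormal `f₀, f₁` the
factor `G` splits as `P F` with `F Fᴴ = 1`, so `TrB Ψ = P Pᴴ` is separable. -/

open Submodule Set Module Matrix

theorem Matrix.range_mulVecLin_self_mul_conjTranspose {m n R : Type*} [Fintype m] [Fintype n]
    [Field R] [PartialOrder R] [StarRing R] [StarOrderedRing R] (A : Matrix m n R) :
    LinearMap.range (A * Aᴴ).mulVecLin = LinearMap.range A.mulVecLin := by
  refine Submodule.eq_of_le_of_finrank_eq ?_ (rank_self_mul_conjTranspose A)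
  rw [mulVecLin_mul]
  exact LinearMap.range_comp_le_range _ _

theorem Matrix.span_range_col_eq_of_mul_conjTranspose_eq {m n n' R : Type*} [Fintype m]
    [Fintype n] [Fintype n'] [Field R] [PartialOrder R] [StarRing R] [StarOrderedRing R]
    {A : Matrix m n R} {B : Matrix m n' R} (h : A * Aᴴ = B * Bᴴ) :
    span R (range A.col) = span R (range B.col) := by
  rw [← range_mulVecLin, ← range_mulVecLin, ← range_mulVecLin_self_mul_conjTranspose, h,
    range_mulVecLin_self_mul_conjTranspose]

theorem finrank_span_pair_le {K M : Type*} [Field K] [AddCommGroup M] [Module K M] (p q : M) :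
    finrank K (span K {p, q}) ≤ 2 := by
  rw [← Matrix.range_cons_cons_empty p q ![]]
  exact (finrank_range_le_card _).trans_eq (Fintype.card_fin 2)

theorem exists_mem_span_singleton_of_not_linearIndependent {K M : Type*} [Field K]
    [AddCommGroup M] [Module K M] {x y : M} (h : ¬ LinearIndependent K ![x, y]) :
    ∃ z, x ∈ K ∙ z ∧ y ∈ K ∙ z := by
  by_cases hx : x = 0
  · exact ⟨y, hx ▸ zero_mem _, mem_span_singleton_self y⟩
  · rw [LinearIndependent.pair_iff' hx] at h
    push Not at h
    obtain ⟨a, ha⟩ := h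
    exact ⟨x, mem_span_singleton_self x, mem_span_singleton.mpr ⟨a, ha⟩⟩

def flattenB {A B : Type*} {k : ℕ} (Ψ : A × B × Fin k → ℂ) : Matrix (A × Fin k) B ℂ :=
  Matrix.of fun p b => Ψ (p.1, b, p.2)

def tensMatrix {A B ι : Type*} (x : ι → A → ℂ) (y : ι → B → ℂ) : Matrix (A × B) ι ℂ :=
  Matrix.of fun p t => tens (x t) (y t) p

@[simp]
theorem col_tensMatrix {A B ι : Type*} (x : ι → A → ℂ) (y : ι → B → ℂ) (t : ι) :
    (tensMatrix x y).col t = tens (x t) (y t) := rfl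

theorem TrB_eq_flattenB_mul_conjTranspose {A B : Type*} [Fintype B] {k : ℕ}
    (Ψ : A × B × Fin k → ℂ) : TrB Ψ = flattenB Ψ * (flattenB Ψ)ᴴ := by
  ext p q
  simp [TrB, flattenB, Matrix.mul_apply]

theorem isSep_iff {A B : Type*} (ρ : Matrix (A × B) (A × B) ℂ) :
    IsSep ρ ↔ ∃ (T : ℕ) (x : Fin T → A → ℂ) (y : Fin T → B → ℂ),
      ρ = tensMatrix x y * (tensMatrix x y)ᴴ := by
  have hsum : ∀ (T : ℕ) (x : Fin T → A → ℂ) (y : Fin T → B → ℂ),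
      tensMatrix x y * (tensMatrix x y)ᴴ = ∑ t : Fin T, Matrix.of (fun p q : A × B =>
        (x t p.1 * (starRingEnd ℂ) (x t q.1)) * (y t p.2 * (starRingEnd ℂ) (y t q.2))) := by
    intro T x y
    ext p q
    simp only [Matrix.mul_apply, conjTranspose_apply, Matrix.sum_apply, Matrix.of_apply,
      tensMatrix, tens, RCLike.star_def, map_mul]
    exact Finset.sum_congr rfl fun t _ => by ring
  simp only [IsSep, hsum]

theorem isEBSpace_span_tens_of_mul_conjTranspose_eq_one {A B : Type*} [Fintype B] {n : ℕ}
    (x : Fin n → A → ℂ) (f : Fin n → B → ℂ) (hf : Matrix.of f * (Matrix.of f)ᴴ = 1) :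
    IsEBSpace (span ℂ (range fun i => tens (x i) (f i))) := by
  intro k _ Ψ hΨ
  choose c hc using fun ℓ => (mem_span_range_iff_exists_fun ℂ).mp (hΨ ℓ)
  have hfactor : flattenB Ψ = tensMatrix x (fun i ℓ => c ℓ i) * Matrix.of f := by
    ext p b
    rw [flattenB, Matrix.of_apply, ← congrFun (hc p.2) (p.1, b)]
    simp only [Finset.sum_apply, Pi.smul_apply, smul_eq_mul, tensMatrix, tens, Matrix.mul_apply,
      Matrix.of_apply]
    exact Finset.sum_congr rfl fun i _ => by ring
  refine (isSep_iff _).mpr ⟨n, x, fun i ℓ => c ℓ i, ?_⟩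
  rw [TrB_eq_flattenB_mul_conjTranspose, hfactor, conjTranspose_mul, Matrix.mul_assoc,
    ← Matrix.mul_assoc (Matrix.of f), hf, Matrix.one_mul]

theorem isEBSpace_span_tens_pair {A B : Type*} [Fintype B] (x y : A → ℂ) {f₀ f₁ : B → ℂ}
    (h₀ : ∑ b, (starRingEnd ℂ) (f₀ b) * f₀ b = 1) (h₁ : ∑ b, (starRingEnd ℂ) (f₁ b) * f₁ b = 1)
    (h₀₁ : ∑ b, (starRingEnd ℂ) (f₀ b) * f₁ b = 0) :
    IsEBSpace (span ℂ {tens x f₀, tens y f₁}) := by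
  have h₁₀ : ∑ b, (starRingEnd ℂ) (f₁ b) * f₀ b = 0 := by
    simpa [map_sum, mul_comm] using congrArg (starRingEnd ℂ) h₀₁
  have hF : Matrix.of ![f₀, f₁] * (Matrix.of ![f₀, f₁])ᴴ = 1 := by
    ext i j
    calc _ = ∑ b, (starRingEnd ℂ) (![f₀, f₁] j b) * ![f₀, f₁] i b :=
          Finset.sum_congr rfl fun b _ => mul_comm _ _
      _ = _ := by fin_cases i <;> fin_cases j <;> simp [h₀, h₁, h₀₁, h₁₀]
  have hrange : range (fun i => tens (![x, y] i) (![f₀, f₁] i)) = {tens x f₀, tens y f₁} := by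
    ext
    simp [Fin.exists_fin_two, eq_comm]
  rw [← hrange]
  exact isEBSpace_span_tens_of_mul_conjTranspose_eq_one _ _ hF

theorem IsEBSpace.exists_span_le_span_tens {A B : Type*} [Fintype A] [Fintype B]
    {V : Submodule ℂ (A × B → ℂ)} (hV : IsEBSpace V) {k : ℕ} (hk : 1 ≤ k)
    (ψ : Fin k → A × B → ℂ) (hψ : ∀ ℓ, ψ ℓ ∈ V) :
    ∃ d ≤ Fintype.card B, ∃ (x : Fin d → A → ℂ) (f : Fin d → B → ℂ),
      span ℂ (range ψ) ≤ span ℂ (range fun i => tens (x i) (f i)) := by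
  set Ψ : A × B × Fin k → ℂ := fun r => ψ r.2.2 (r.1, r.2.1)
  obtain ⟨T, y, u, hρ⟩ := (isSep_iff _).mp (hV k hk Ψ hψ)
  have hspan := span_range_col_eq_of_mul_conjTranspose_eq
    ((TrB_eq_flattenB_mul_conjTranspose Ψ).symm.trans hρ)
  obtain ⟨P, hP, hPspan, -⟩ := exists_fun_fin_finrank_span_eq ℂ (range (tensMatrix y u).col)
  choose t ht using hP
  have hd : finrank ℂ (span ℂ (range (tensMatrix y u).col)) ≤ Fintype.card B := by
    rw [← hspan]
    exact finrank_range_le_card _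
  have hmem : ∀ b, (flattenB Ψ).col b ∈ span ℂ (range P) := fun b => by
    rw [hPspan, ← hspan]
    exact subset_span (mem_range_self b)
  choose c hc using fun b => (mem_span_range_iff_exists_fun ℂ).mp (hmem b)
  refine ⟨_, hd, fun i => y (t i), fun i b => c b i, span_le.mpr ?_⟩
  rintro _ ⟨ℓ, rfl⟩
  have hψℓ : ψ ℓ = ∑ i, u (t i) ℓ • tens (y (t i)) (fun b => c b i) := by
    funext ⟨a, b⟩
    have := congrFun (hc b) (a, ℓ)
    simp only [← ht, col_tensMatrix, Finset.sum_apply, Pi.smul_apply, smul_eq_mul, tens] at this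
    simp only [Finset.sum_apply, Pi.smul_apply, smul_eq_mul, tens]
    rw [show ψ ℓ (a, b) = (flattenB Ψ).col b (a, ℓ) from rfl, ← this]
    exact Finset.sum_congr rfl fun i _ => by ring
  rw [hψℓ]
  exact sum_mem fun i _ => smul_mem _ _ (subset_span (mem_range_self i))

theorem IsEBSpace.exists_eq_span_tens_pair {A : Type*} [Fintype A]
    {V : Submodule ℂ (A × Fin 2 → ℂ)} (hV : IsEBSpace V) (hdim : finrank ℂ V = 2) :
    ∃ (x y : A → ℂ) (f f' : Fin 2 → ℂ), V = span ℂ {tens x f, tens y f'} := by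
  obtain ⟨ψ, hψV, hψspan, -⟩ := exists_fun_fin_finrank_span_eq ℂ (V : Set (A × Fin 2 → ℂ))
  have hk : 1 ≤ finrank ℂ (span ℂ (V : Set (A × Fin 2 → ℂ))) := by
    rw [Submodule.span_eq, hdim]
    norm_num
  obtain ⟨d, hd, x, f, hle⟩ := hV.exists_span_le_span_tens hk ψ hψV
  rw [hψspan, Submodule.span_eq] at hle
  have hrank := (Submodule.finrank_mono hle).trans (finrank_range_le_card _)
  rw [hdim, Fintype.card_fin] at hrank
  rw [Fintype.card_fin] at hd
  obtain rfl : d = 2 := by omega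
  have hrange : range (fun i => tens (x i) (f i)) = {tens (x 0) (f 0), tens (x 1) (f 1)} := by
    ext
    simp [Fin.exists_fin_two, eq_comm]
  rw [hrange] at hle
  exact ⟨x 0, x 1, f 0, f 1, eq_of_le_of_finrank_le hle (hdim.symm ▸ finrank_span_pair_le _ _)⟩

theorem eq_zero_or_of_tens_mem_span_tens_single {A : Type*} {x y u : A → ℂ} {s : Fin 2 → ℂ}
    (hxy : LinearIndependent ℂ ![x, y])
    (hu : tens u s ∈ span ℂ {tens x (Pi.single 0 1), tens y (Pi.single 1 1)}) :
    u = 0 ∨ s 0 = 0 ∨ s 1 = 0 := by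
  obtain ⟨γ, δ, h⟩ := mem_span_pair.mp hu
  have h0 : s 0 • u = γ • x := funext fun a => by
    simpa [tens, mul_comm] using (congrFun h (a, 0)).symm
  have h1 : s 1 • u = δ • y := funext fun a => by
    simpa [tens, mul_comm] using (congrFun h (a, 1)).symm
  by_contra! hne
  obtain ⟨hu0, hs0, hs1⟩ := hne
  have hdep : (s 1 * γ) • x + (-(s 0 * δ)) • y = 0 := by
    calc (s 1 * γ) • x + (-(s 0 * δ)) • y = s 1 • (γ • x) - s 0 • (δ • y) := by module
      _ = 0 := by rw [← h0, ← h1, smul_smul, smul_smul, mul_comm, sub_self]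
  obtain ⟨hγ, -⟩ := LinearIndependent.pair_iff.mp hxy _ _ hdep
  have : s 0 • u = 0 := by rw [h0, (mul_eq_zero.mp hγ).resolve_left hs1, zero_smul]
  exact hu0 ((smul_eq_zero.mp this).resolve_left hs0)

theorem IsEBSpace.sum_conj_mul_eq_zero {A B : Type*} [Fintype A] [Fintype B]
    {V : Submodule ℂ (A × B → ℂ)} (hV : IsEBSpace V) {x y : A → ℂ} {f f' : B → ℂ}
    (hxy : LinearIndependent ℂ ![x, y]) (hx : tens x f ∈ V) (hy : tens y f' ∈ V) :
    ∑ b, (starRingEnd ℂ) (f b) * f' b = 0 := by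
  set Ψ : A × B × Fin 2 → ℂ := fun r => ![tens x f, tens y f'] r.2.2 (r.1, r.2.1)
  have hΨ : ∀ ℓ, (fun ab : A × B => Ψ (ab.1, ab.2, ℓ)) ∈ V := by
    intro ℓ
    fin_cases ℓ
    exacts [hx, hy]
  obtain ⟨T, z, u, hρ⟩ := (isSep_iff _).mp (hV 2 one_le_two Ψ hΨ)
  have hspan := span_range_col_eq_of_mul_conjTranspose_eq
    ((TrB_eq_flattenB_mul_conjTranspose Ψ).symm.trans hρ)
  have hcol : span ℂ (range (flattenB Ψ).col)
      ≤ span ℂ {tens x (Pi.single 0 1), tens y (Pi.single 1 1)} := by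
    rw [span_le]
    rintro _ ⟨b, rfl⟩
    refine mem_span_pair.mpr ⟨f b, f' b, ?_⟩
    funext ⟨a, ℓ⟩
    fin_cases ℓ <;> simp [flattenB, Ψ, tens, mul_comm]
  have hprod : ∀ t, z t = 0 ∨ u t 0 = 0 ∨ u t 1 = 0 := fun t =>
    eq_zero_or_of_tens_mem_span_tens_single hxy (hcol (hspan ▸ subset_span (mem_range_self t)))
  obtain ⟨a₀, ha₀⟩ := Function.ne_iff.mp (hxy.ne_zero 0)
  obtain ⟨a₁, ha₁⟩ := Function.ne_iff.mp (hxy.ne_zero 1)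
  have hentry := congrFun (congrFun hρ (a₀, 0)) (a₁, 1)
  have hrhs : (tensMatrix z u * (tensMatrix z u)ᴴ) (a₀, 0) (a₁, 1) = 0 := by
    simp only [Matrix.mul_apply, conjTranspose_apply, tensMatrix, Matrix.of_apply, tens]
    exact Finset.sum_eq_zero fun t _ => by rcases hprod t with h | h | h <;> simp [h]
  rw [hrhs] at hentry
  simp only [TrB, Ψ, tens, Matrix.of_apply, Matrix.cons_val_zero, Matrix.cons_val_one,
    map_mul] at hentry
  have hfactor : x a₀ * (starRingEnd ℂ) (y a₁) *
      (starRingEnd ℂ) (∑ b, (starRingEnd ℂ) (f b) * f' b) = 0 := by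
    rw [← hentry, map_sum, Finset.mul_sum]
    exact Finset.sum_congr rfl fun b _ => by simp only [map_mul, Complex.conj_conj]; ring
  exact (map_eq_zero _).mp
    ((mul_eq_zero.mp hfactor).resolve_left (mul_ne_zero ha₀ (by simpa using ha₁)))

theorem exists_smul_sum_conj_mul_self_eq_one {ι : Type*} [Fintype ι] {f : ι → ℂ} (hf : f ≠ 0) :
    ∃ c : ℂ, c ≠ 0 ∧ ∑ b, (starRingEnd ℂ) ((c • f) b) * (c • f) b = 1 := by
  set v : EuclideanSpace ℂ ι := WithLp.toLp 2 f
  have hv : v ≠ 0 := by simpa [v] using hf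
  refine ⟨(‖v‖⁻¹ : ℂ), by simpa using hv, ?_⟩
  have h := inner_self_eq_norm_sq_to_K (𝕜 := ℂ) ((‖v‖⁻¹ : ℂ) • v)
  rw [show ‖(‖v‖⁻¹ : ℂ) • v‖ = 1 by simp [norm_smul, hv], RCLike.ofReal_one, one_pow,
    PiLp.inner_apply] at h
  rw [← h]
  simp only [v, WithLp.ofLp_smul, Pi.smul_apply, RCLike.inner_apply']

theorem exists_orthonormal_span_tens_pair_eq {A B : Type*} [Fintype B] (x y : A → ℂ)
    {f f' : B → ℂ} (hf : f ≠ 0) (hf' : f' ≠ 0) (horth : ∑ b, (starRingEnd ℂ) (f b) * f' b = 0) :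
    ∃ (x₀ y₀ : A → ℂ) (f₀ f₁ : B → ℂ),
      (∑ b, (starRingEnd ℂ) (f₀ b) * f₀ b) = 1 ∧
      (∑ b, (starRingEnd ℂ) (f₁ b) * f₁ b) = 1 ∧
      (∑ b, (starRingEnd ℂ) (f₀ b) * f₁ b) = 0 ∧
      span ℂ {tens x f, tens y f'} = span ℂ {tens x₀ f₀, tens y₀ f₁} := by
  obtain ⟨c, hc, hcf⟩ := exists_smul_sum_conj_mul_self_eq_one hf
  obtain ⟨c', hc', hcf'⟩ := exists_smul_sum_conj_mul_self_eq_one hf'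
  have htens : ∀ (a : ℂ) (z : A → ℂ) (g : B → ℂ), a ≠ 0 → tens (a⁻¹ • z) (a • g) = tens z g := by
    intro a z g ha
    funext p
    simp only [tens, Pi.smul_apply, smul_eq_mul]
    field_simp
  refine ⟨c⁻¹ • x, c'⁻¹ • y, c • f, c' • f', hcf, hcf', ?_, ?_⟩
  · calc ∑ b, (starRingEnd ℂ) ((c • f) b) * (c' • f') b
        = (starRingEnd ℂ) c * c' * ∑ b, (starRingEnd ℂ) (f b) * f' b := by
          rw [Finset.mul_sum]
          refine Finset.sum_congr rfl fun b _ => ?_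
          simp only [Pi.smul_apply, smul_eq_mul, map_mul]
          ring
      _ = 0 := by rw [horth, mul_zero]
  · rw [htens c x f hc, htens c' y f' hc']

theorem tens_mem_span_tens_single {A : Type*} {x z : A → ℂ} (hx : x ∈ ℂ ∙ z) (f : Fin 2 → ℂ) :
    tens x f ∈ span ℂ {tens z (Pi.single 0 1), tens z (Pi.single 1 1)} := by
  obtain ⟨a, rfl⟩ := mem_span_singleton.mp hx
  refine mem_span_pair.mpr ⟨a * f 0, a * f 1, ?_⟩
  funext ⟨i, b⟩
  fin_cases b <;> simp [tens] <;> ring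

theorem eq_span_tens_single_of_not_linearIndependent {A : Type*} [Fintype A]
    {V : Submodule ℂ (A × Fin 2 → ℂ)} (hdim : finrank ℂ V = 2) {x y : A → ℂ} {f f' : Fin 2 → ℂ}
    (hV : V = span ℂ {tens x f, tens y f'}) (hxy : ¬ LinearIndependent ℂ ![x, y]) :
    ∃ z, V = span ℂ {tens z (Pi.single 0 1), tens z (Pi.single 1 1)} := by
  obtain ⟨z, hxz, hyz⟩ := exists_mem_span_singleton_of_not_linearIndependent hxy
  refine ⟨z, eq_of_le_of_finrank_le ?_ (hdim.symm ▸ finrank_span_pair_le _ _)⟩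
  rw [hV, span_le, Set.insert_subset_iff, Set.singleton_subset_iff]
  exact ⟨tens_mem_span_tens_single hxz f, tens_mem_span_tens_single hyz f'⟩

/-- A 2-dimensional subspace of `ℂ^m ⊗ ℂ²` is EB iff it is spanned by `x ⊗ f₀, y ⊗ f₁`
for some vectors `x, y` and an orthonormal basis `f₀, f₁` of `ℂ²`. -/
theorem eb_two_dim_qubit {m : ℕ} (V : Submodule ℂ (Fin m × Fin 2 → ℂ))
    (hdim : Module.finrank ℂ V = 2) :
    IsEBSpace V ↔
      ∃ (x y : Fin m → ℂ) (f₀ f₁ : Fin 2 → ℂ),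
        (∑ b : Fin 2, (starRingEnd ℂ) (f₀ b) * f₀ b) = 1 ∧
        (∑ b : Fin 2, (starRingEnd ℂ) (f₁ b) * f₁ b) = 1 ∧
        (∑ b : Fin 2, (starRingEnd ℂ) (f₀ b) * f₁ b) = 0 ∧
        V = Submodule.span ℂ {tens x f₀, tens y f₁} := by
  constructor
  · intro hEB
    obtain ⟨x, y, f, f', hV⟩ := hEB.exists_eq_span_tens_pair hdim
    by_cases hxy : LinearIndependent ℂ ![x, y]
    · have hli : LinearIndependent ℂ ![tens x f, tens y f'] := by
        rw [linearIndependent_iff_card_eq_finrank_span, Set.finrank, Matrix.range_cons_cons_empty,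
          ← hV, hdim, Fintype.card_fin]
      have hf : f ≠ 0 := by
        rintro rfl
        exact hli.ne_zero 0 (funext fun p => by simp [tens])
      have hf' : f' ≠ 0 := by
        rintro rfl
        exact hli.ne_zero 1 (funext fun p => by simp [tens])
      have horth := hEB.sum_conj_mul_eq_zero hxy (by rw [hV]; exact subset_span (mem_insert _ _))
        (by rw [hV]; exact subset_span (mem_insert_of_mem _ rfl))
      rw [hV]
      exact exists_orthonormal_span_tens_pair_eq x y hf hf' horth
    · obtain ⟨z, hz⟩ := eq_span_tens_single_of_not_linearIndependent hdim hV hxy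
      exact ⟨z, z, Pi.single 0 1, Pi.single 1 1, by simp, by simp, by simp, hz⟩
  · rintro ⟨x, y, f₀, f₁, h₀, h₁, h₀₁, rfl⟩
    exact isEBSpace_span_tens_pair x y h₀ h₁ h₀₁
end
end

section
/- Let V ⊆ ℂ^{m₁} ⊗ ℂ^{n₁} and W ⊆ ℂ^{m₂} ⊗ ℂ^{n₂} be entanglement-breaking spaces. Define V ⊠ W ⊆ ℂ^{m₁m₂} ⊗ ℂ^{n₁n₂} as the span of the vectors ((a₁,a₂),(b₁,b₂)) ↦ v(a₁,b₁)·w(a₂,b₂) for v ∈ V and w ∈ W (i.e., the tensor product of V and W with the A-systems grouped together and the B-systems grouped together). Then V ⊠ W is an entanglement-breaking space. -/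
open scoped BigOperators ComplexOrder
open Kronecker

noncomputable section

set_option maxHeartbeats 1000000


private lemma mem_of_dual {E : Type*} [AddCommGroup E] [Module ℂ E] (U : Submodule ℂ E) (y : E)
    (h : ∀ f : Module.Dual ℂ E, (∀ u ∈ U, f u = 0) → f y = 0) : y ∈ U := by
  rw [← Subspace.forall_mem_dualAnnihilator_apply_eq_zero_iff]
  intro φ hφ
  exact h φ fun u hu => (Submodule.mem_dualAnnihilator φ).mp hφ u hu

private lemma support_lemma {A B C : Type} [Fintype A] [Fintype B] [Fintype C] [DecidableEq C]
    (U : Submodule ℂ (C → ℂ)) (Z : A → B → C → ℂ) (hZ : ∀ a b, Z a b ∈ U)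
    {T : ℕ} (x : Fin T → A → ℂ) (Y : Fin T → C → ℂ)
    (hcorr : ∀ c c' : C, ∑ a : A, ∑ b : B, Z a b c * (starRingEnd ℂ) (Z a b c')
        = ∑ t : Fin T, (∑ a : A, x t a * (starRingEnd ℂ) (x t a)) *
            (Y t c * (starRingEnd ℂ) (Y t c')))
    (t : Fin T) (hx : x t ≠ 0) : Y t ∈ U := by
  apply mem_of_dual
  intro f hf
  set φ : C → ℂ := fun c => f fun j => if c = j then 1 else 0 with hφdef
  have hexp : ∀ g : C → ℂ, f g = ∑ c, g c * φ c := by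
    intro g
    rw [LinearMap.pi_apply_eq_sum_univ f g]
    simp [hφdef, smul_eq_mul]
  have quad : ∀ g : C → ℂ, f g * (starRingEnd ℂ) (f g)
      = ∑ c, ∑ c', (g c * (starRingEnd ℂ) (g c')) * (φ c * (starRingEnd ℂ) (φ c')) := by
    intro g
    rw [hexp g, map_sum, Finset.sum_mul_sum]
    exact Finset.sum_congr rfl fun c _ => Finset.sum_congr rfl fun c' _ => by
      rw [map_mul]; ring
  have rearr : ∀ {ι : Type} [Fintype ι] (g : ι → C → ℂ),
      ∑ i, f (g i) * (starRingEnd ℂ) (f (g i))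
        = ∑ c, ∑ c', (∑ i, g i c * (starRingEnd ℂ) (g i c')) *
            (φ c * (starRingEnd ℂ) (φ c')) := by
    intro ι _ g
    calc ∑ i, f (g i) * (starRingEnd ℂ) (f (g i))
        = ∑ i, ∑ c, ∑ c', (g i c * (starRingEnd ℂ) (g i c')) *
            (φ c * (starRingEnd ℂ) (φ c')) :=
          Finset.sum_congr rfl fun i _ => quad (g i)
      _ = ∑ c, ∑ i, ∑ c', (g i c * (starRingEnd ℂ) (g i c')) *
            (φ c * (starRingEnd ℂ) (φ c')) := Finset.sum_comm
      _ = ∑ c, ∑ c', ∑ i, (g i c * (starRingEnd ℂ) (g i c')) *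
            (φ c * (starRingEnd ℂ) (φ c')) :=
          Finset.sum_congr rfl fun c _ => Finset.sum_comm
      _ = ∑ c, ∑ c', (∑ i, g i c * (starRingEnd ℂ) (g i c')) *
            (φ c * (starRingEnd ℂ) (φ c')) :=
          Finset.sum_congr rfl fun c _ => Finset.sum_congr rfl fun c' _ =>
            (Finset.sum_mul _ _ _).symm
  have key : ∑ t' : Fin T, (∑ a, x t' a * (starRingEnd ℂ) (x t' a)) *
      (f (Y t') * (starRingEnd ℂ) (f (Y t'))) = 0 := by
    have hG : ∑ p : Fin T × A, f ((fun p : Fin T × A => x p.1 p.2 • Y p.1) p) *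
        (starRingEnd ℂ) (f ((fun p : Fin T × A => x p.1 p.2 • Y p.1) p))
        = ∑ t' : Fin T, (∑ a, x t' a * (starRingEnd ℂ) (x t' a)) *
          (f (Y t') * (starRingEnd ℂ) (f (Y t'))) := by
      rw [Fintype.sum_prod_type]
      refine Finset.sum_congr rfl fun t' _ => ?_
      rw [Finset.sum_mul]
      refine Finset.sum_congr rfl fun a _ => ?_
      rw [map_smul, smul_eq_mul, map_mul]
      ring
    have hZcorr : ∀ c c', (∑ p : Fin T × A, (x p.1 p.2 • Y p.1) c *
        (starRingEnd ℂ) ((x p.1 p.2 • Y p.1) c'))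
        = ∑ q : A × B, Z q.1 q.2 c * (starRingEnd ℂ) (Z q.1 q.2 c') := by
      intro c c'
      rw [Fintype.sum_prod_type, Fintype.sum_prod_type, hcorr c c']
      refine Finset.sum_congr rfl fun t' _ => ?_
      rw [Finset.sum_mul]
      refine Finset.sum_congr rfl fun a _ => ?_
      simp only [Pi.smul_apply, smul_eq_mul, map_mul]
      ring
    calc ∑ t' : Fin T, (∑ a, x t' a * (starRingEnd ℂ) (x t' a)) *
          (f (Y t') * (starRingEnd ℂ) (f (Y t')))
        = ∑ p : Fin T × A, f (x p.1 p.2 • Y p.1) * (starRingEnd ℂ) (f (x p.1 p.2 • Y p.1)) :=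
          hG.symm
      _ = ∑ c, ∑ c', (∑ p : Fin T × A, (x p.1 p.2 • Y p.1) c *
            (starRingEnd ℂ) ((x p.1 p.2 • Y p.1) c')) * (φ c * (starRingEnd ℂ) (φ c')) :=
          rearr _
      _ = ∑ c, ∑ c', (∑ q : A × B, Z q.1 q.2 c * (starRingEnd ℂ) (Z q.1 q.2 c')) *
            (φ c * (starRingEnd ℂ) (φ c')) := by
          exact Finset.sum_congr rfl fun c _ => Finset.sum_congr rfl fun c' _ => by
            rw [hZcorr]
      _ = ∑ q : A × B, f (Z q.1 q.2) * (starRingEnd ℂ) (f (Z q.1 q.2)) := (rearr (fun q : A × B => Z q.1 q.2)).symm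
      _ = 0 := Finset.sum_eq_zero fun q _ => by rw [hf _ (hZ q.1 q.2)]; simp
  -- now turn into real statement
  have hreal : ∀ t' : Fin T, (∑ a, x t' a * (starRingEnd ℂ) (x t' a)) *
      (f (Y t') * (starRingEnd ℂ) (f (Y t')))
      = (((∑ a, Complex.normSq (x t' a)) * Complex.normSq (f (Y t')) : ℝ) : ℂ) := by
    intro t'
    simp only [Complex.mul_conj]
    push_cast
    rfl
  rw [Finset.sum_congr rfl fun t' _ => hreal t'] at key
  rw [← Complex.ofReal_sum] at key
  have key2 : ∑ t' : Fin T, (∑ a, Complex.normSq (x t' a)) * Complex.normSq (f (Y t')) = 0 :=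
    Complex.ofReal_eq_zero.mp key
  have hnn : ∀ t' ∈ Finset.univ (α := Fin T),
      0 ≤ (∑ a, Complex.normSq (x t' a)) * Complex.normSq (f (Y t')) := fun t' _ =>
    mul_nonneg (Finset.sum_nonneg fun a _ => Complex.normSq_nonneg _) (Complex.normSq_nonneg _)
  have hzero := (Finset.sum_eq_zero_iff_of_nonneg hnn).mp key2 t (Finset.mem_univ t)
  have hxpos : 0 < ∑ a, Complex.normSq (x t a) := by
    obtain ⟨a, ha⟩ := Function.ne_iff.mp hx
    exact Finset.sum_pos' (fun a _ => Complex.normSq_nonneg _)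
      ⟨a, Finset.mem_univ a, Complex.normSq_pos.mpr ha⟩
  have : Complex.normSq (f (Y t)) = 0 := by
    rcases mul_eq_zero.mp hzero with h | h
    · exact absurd h (ne_of_gt hxpos)
    · exact h
  exact Complex.normSq_eq_zero.mp this


private lemma slice_left {m₁ n₁ m₂ n₂ : ℕ}
    (V : Submodule ℂ (Fin m₁ × Fin n₁ → ℂ)) (W : Submodule ℂ (Fin m₂ × Fin n₂ → ℂ))
    {u : (Fin m₁ × Fin m₂) × (Fin n₁ × Fin n₂) → ℂ}
    (hu : u ∈ Submodule.span ℂ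
      {u : (Fin m₁ × Fin m₂) × (Fin n₁ × Fin n₂) → ℂ |
        ∃ v ∈ V, ∃ w ∈ W, u = fun p => v (p.1.1, p.2.1) * w (p.1.2, p.2.2)})
    (a₂ : Fin m₂) (b₂ : Fin n₂) :
    (fun ab : Fin m₁ × Fin n₁ => u ((ab.1, a₂), (ab.2, b₂))) ∈ V := by
  induction hu using Submodule.span_induction with
  | mem u hu =>
    obtain ⟨v, hv, w, hw, rfl⟩ := hu
    convert V.smul_mem (w (a₂, b₂)) hv using 1
    funext ab
    simp [mul_comm]
  | zero => exact V.zero_mem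
  | add f g hf hg ihf ihg => exact V.add_mem ihf ihg
  | smul c f hf ih => exact V.smul_mem c ih

private lemma slice_right {m₁ n₁ m₂ n₂ : ℕ}
    (V : Submodule ℂ (Fin m₁ × Fin n₁ → ℂ)) (W : Submodule ℂ (Fin m₂ × Fin n₂ → ℂ))
    {u : (Fin m₁ × Fin m₂) × (Fin n₁ × Fin n₂) → ℂ}
    (hu : u ∈ Submodule.span ℂ
      {u : (Fin m₁ × Fin m₂) × (Fin n₁ × Fin n₂) → ℂ |
        ∃ v ∈ V, ∃ w ∈ W, u = fun p => v (p.1.1, p.2.1) * w (p.1.2, p.2.2)})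
    (a₁ : Fin m₁) (b₁ : Fin n₁) :
    (fun ab : Fin m₂ × Fin n₂ => u ((a₁, ab.1), (b₁, ab.2))) ∈ W := by
  induction hu using Submodule.span_induction with
  | mem u hu =>
    obtain ⟨v, hv, w, hw, rfl⟩ := hu
    exact W.smul_mem (v (a₁, b₁)) hw
  | zero => exact W.zero_mem
  | add f g hf hg ihf ihg => exact W.add_mem ihf ihg
  | smul c f hf ih => exact W.smul_mem c ih

/-- The tensor product of two EB spaces (A-systems grouped, B-systems grouped) is EB. -/
theorem eb_tensor {m₁ n₁ m₂ n₂ : ℕ}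
    (V : Submodule ℂ (Fin m₁ × Fin n₁ → ℂ)) (W : Submodule ℂ (Fin m₂ × Fin n₂ → ℂ))
    (hV : IsEBSpace V) (hW : IsEBSpace W) :
    IsEBSpace (Submodule.span ℂ
      {u : (Fin m₁ × Fin m₂) × (Fin n₁ × Fin n₂) → ℂ |
        ∃ v ∈ V, ∃ w ∈ W, u = fun p => v (p.1.1, p.2.1) * w (p.1.2, p.2.2)}) := by
  classical
  intro k hk Ψ hΨ
  rcases Nat.eq_zero_or_pos m₂ with hm₂ | hm₂
  · subst hm₂
    exact ⟨0, Fin.elim0, Fin.elim0, by ext ⟨⟨a₁, a₂⟩, ℓ⟩ q; exact a₂.elim0⟩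
  rcases Nat.eq_zero_or_pos n₂ with hn₂ | hn₂
  · subst hn₂
    refine ⟨0, Fin.elim0, Fin.elim0, ?_⟩
    ext p q
    simp [TrB]
  -- main case
  set e : Fin m₂ × Fin n₂ × Fin k ≃ Fin (m₂ * (n₂ * k)) :=
    ((Equiv.refl (Fin m₂)).prodCongr finProdFinEquiv).trans finProdFinEquiv with he
  set Ψ' : Fin m₁ × Fin n₁ × Fin (m₂ * (n₂ * k)) → ℂ :=
    fun q => Ψ ((q.1, (e.symm q.2.2).1), (q.2.1, (e.symm q.2.2).2.1), (e.symm q.2.2).2.2)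
    with hΨ'
  have hslicesV : ∀ r : Fin (m₂ * (n₂ * k)),
      (fun ab : Fin m₁ × Fin n₁ => Ψ' (ab.1, ab.2, r)) ∈ V := by
    intro r
    exact slice_left V W (hΨ (e.symm r).2.2) (e.symm r).1 (e.symm r).2.1
  obtain ⟨T, x, y, hxy⟩ :=
    hV (m₂ * (n₂ * k)) (Nat.mul_pos hm₂ (Nat.mul_pos hn₂ hk)) Ψ' hslicesV
  have hent : ∀ (a₁ a₁' : Fin m₁) (r r' : Fin (m₂ * (n₂ * k))),
      (∑ b₁ : Fin n₁, Ψ' (a₁, b₁, r) * (starRingEnd ℂ) (Ψ' (a₁', b₁, r')))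
      = ∑ t : Fin T, (x t a₁ * (starRingEnd ℂ) (x t a₁')) *
          (y t r * (starRingEnd ℂ) (y t r')) := by
    intro a₁ a₁' r r'
    have h := Matrix.ext_iff.mpr hxy (a₁, r) (a₁', r')
    simpa [TrB, Matrix.sum_apply] using h
  set Y : Fin T → (Fin m₂ × Fin n₂ × Fin k → ℂ) := fun t c => y t (e c) with hY
  set Yt : Fin T → (Fin m₂ × Fin n₂ × Fin k → ℂ) :=
    fun t => if x t = 0 then 0 else Y t with hYt
  set U : Submodule ℂ (Fin m₂ × Fin n₂ × Fin k → ℂ) :=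
    { carrier := {g | ∀ ℓ : Fin k, (fun ab : Fin m₂ × Fin n₂ => g (ab.1, ab.2, ℓ)) ∈ W}
      add_mem' := fun hg hh ℓ => W.add_mem (hg ℓ) (hh ℓ)
      zero_mem' := fun ℓ => W.zero_mem
      smul_mem' := fun c g hg ℓ => W.smul_mem c (hg ℓ) } with hU
  set Z : Fin m₁ → Fin n₁ → (Fin m₂ × Fin n₂ × Fin k → ℂ) :=
    fun a₁ b₁ c => Ψ ((a₁, c.1), (b₁, c.2.1), c.2.2) with hZdef
  have hZU : ∀ a₁ b₁, Z a₁ b₁ ∈ U := by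
    intro a₁ b₁ ℓ
    exact slice_right V W (hΨ ℓ) a₁ b₁
  have hΨ'e : ∀ (a₁ : Fin m₁) (b₁ : Fin n₁) (c : Fin m₂ × Fin n₂ × Fin k),
      Ψ' (a₁, b₁, e c) = Z a₁ b₁ c := by
    intro a₁ b₁ c
    simp [hΨ', hZdef]
  have hcorr : ∀ c c' : Fin m₂ × Fin n₂ × Fin k,
      ∑ a₁ : Fin m₁, ∑ b₁ : Fin n₁, Z a₁ b₁ c * (starRingEnd ℂ) (Z a₁ b₁ c')
      = ∑ t : Fin T, (∑ a₁ : Fin m₁, x t a₁ * (starRingEnd ℂ) (x t a₁)) *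
          (Y t c * (starRingEnd ℂ) (Y t c')) := by
    intro c c'
    calc ∑ a₁ : Fin m₁, ∑ b₁ : Fin n₁, Z a₁ b₁ c * (starRingEnd ℂ) (Z a₁ b₁ c')
        = ∑ a₁ : Fin m₁, ∑ t : Fin T, (x t a₁ * (starRingEnd ℂ) (x t a₁)) *
            (y t (e c) * (starRingEnd ℂ) (y t (e c'))) := by
          refine Finset.sum_congr rfl fun a₁ _ => ?_
          rw [← hent a₁ a₁ (e c) (e c')]
          exact Finset.sum_congr rfl fun b₁ _ => by rw [hΨ'e, hΨ'e]
      _ = ∑ t : Fin T, (∑ a₁ : Fin m₁, x t a₁ * (starRingEnd ℂ) (x t a₁)) *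
            (Y t c * (starRingEnd ℂ) (Y t c')) := by
          rw [Finset.sum_comm]
          refine Finset.sum_congr rfl fun t _ => ?_
          rw [Finset.sum_mul]
  have hYtW : ∀ t : Fin T, ∀ ℓ : Fin k,
      (fun ab : Fin m₂ × Fin n₂ => Yt t (ab.1, ab.2, ℓ)) ∈ W := by
    intro t ℓ
    by_cases hx : x t = 0
    · simp only [hYt, if_pos hx]
      exact W.zero_mem
    · have hmem : Y t ∈ U := support_lemma U Z hZU x Y hcorr t hx
      simp only [hYt, if_neg hx]
      exact hmem ℓ
  have hsep : ∀ t : Fin T, IsSep (TrB (Yt t)) := fun t => hW k hk (Yt t) (hYtW t)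
  choose T' u z hz using hsep
  set σe : (Σ t : Fin T, Fin (T' t)) ≃ Fin (Fintype.card (Σ t : Fin T, Fin (T' t))) :=
    Fintype.equivFin _ with hσe
  refine ⟨Fintype.card (Σ t : Fin T, Fin (T' t)),
    fun i => fun a : Fin m₁ × Fin m₂ =>
      x (σe.symm i).1 a.1 * u (σe.symm i).1 (σe.symm i).2 a.2,
    fun i => z (σe.symm i).1 (σe.symm i).2, ?_⟩
  ext ⟨⟨a₁, a₂⟩, ℓ⟩ ⟨⟨a₁', a₂'⟩, ℓ'⟩
  have hzent : ∀ (t : Fin T) (p q : Fin m₂ × Fin k),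
      TrB (Yt t) p q = ∑ s : Fin (T' t),
        (u t s p.1 * (starRingEnd ℂ) (u t s q.1)) *
          (z t s p.2 * (starRingEnd ℂ) (z t s q.2)) := by
    intro t p q
    have h := Matrix.ext_iff.mpr (hz t) p q
    simpa [Matrix.sum_apply] using h
  have lhs_eq : TrB Ψ ((a₁, a₂), ℓ) ((a₁', a₂'), ℓ')
      = ∑ s : Σ t : Fin T, Fin (T' t),
          ((x s.1 a₁ * u s.1 s.2 a₂) * (starRingEnd ℂ) (x s.1 a₁' * u s.1 s.2 a₂')) *
            (z s.1 s.2 ℓ * (starRingEnd ℂ) (z s.1 s.2 ℓ')) := by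
    calc TrB Ψ ((a₁, a₂), ℓ) ((a₁', a₂'), ℓ')
        = ∑ b₁ : Fin n₁, ∑ b₂ : Fin n₂,
            Ψ ((a₁, a₂), (b₁, b₂), ℓ) * (starRingEnd ℂ) (Ψ ((a₁', a₂'), (b₁, b₂), ℓ')) := by
          simp [TrB, Fintype.sum_prod_type]
      _ = ∑ b₂ : Fin n₂, ∑ b₁ : Fin n₁,
            Ψ ((a₁, a₂), (b₁, b₂), ℓ) * (starRingEnd ℂ) (Ψ ((a₁', a₂'), (b₁, b₂), ℓ')) :=
          Finset.sum_comm
      _ = ∑ b₂ : Fin n₂, ∑ t : Fin T, (x t a₁ * (starRingEnd ℂ) (x t a₁')) *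
            (y t (e (a₂, b₂, ℓ)) * (starRingEnd ℂ) (y t (e (a₂', b₂, ℓ')))) := by
          refine Finset.sum_congr rfl fun b₂ _ => ?_
          rw [← hent a₁ a₁' (e (a₂, b₂, ℓ)) (e (a₂', b₂, ℓ'))]
          refine Finset.sum_congr rfl fun b₁ _ => ?_
          rw [hΨ'e a₁ b₁ (a₂, b₂, ℓ), hΨ'e a₁' b₁ (a₂', b₂, ℓ')]
      _ = ∑ t : Fin T, (x t a₁ * (starRingEnd ℂ) (x t a₁')) *
            (∑ b₂ : Fin n₂, y t (e (a₂, b₂, ℓ)) * (starRingEnd ℂ) (y t (e (a₂', b₂, ℓ')))) := by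
          rw [Finset.sum_comm]
          exact Finset.sum_congr rfl fun t _ => (Finset.mul_sum _ _ _).symm
      _ = ∑ t : Fin T, (x t a₁ * (starRingEnd ℂ) (x t a₁')) *
            TrB (Yt t) (a₂, ℓ) (a₂', ℓ') := by
          refine Finset.sum_congr rfl fun t _ => ?_
          by_cases hx : x t = 0
          · simp [show x t a₁ = 0 from congrFun hx a₁]
          · have : TrB (Yt t) (a₂, ℓ) (a₂', ℓ')
                = ∑ b₂ : Fin n₂, y t (e (a₂, b₂, ℓ)) * (starRingEnd ℂ) (y t (e (a₂', b₂, ℓ'))) := by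
              simp [TrB, hYt, if_neg hx, hY]
            rw [this]
      _ = ∑ t : Fin T, ∑ s : Fin (T' t),
            ((x t a₁ * u t s a₂) * (starRingEnd ℂ) (x t a₁' * u t s a₂')) *
              (z t s ℓ * (starRingEnd ℂ) (z t s ℓ')) := by
          refine Finset.sum_congr rfl fun t _ => ?_
          rw [hzent t (a₂, ℓ) (a₂', ℓ'), Finset.mul_sum]
          refine Finset.sum_congr rfl fun s _ => ?_
          simp only [map_mul]
          ring
      _ = ∑ s : Σ t : Fin T, Fin (T' t),
            ((x s.1 a₁ * u s.1 s.2 a₂) * (starRingEnd ℂ) (x s.1 a₁' * u s.1 s.2 a₂')) *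
              (z s.1 s.2 ℓ * (starRingEnd ℂ) (z s.1 s.2 ℓ')) := by
          rw [← Finset.univ_sigma_univ, Finset.sum_sigma]
  rw [Matrix.sum_apply, lhs_eq]
  refine (Equiv.sum_comp σe.symm (fun s : Σ t : Fin T, Fin (T' t) =>
    ((x s.1 a₁ * u s.1 s.2 a₂) * (starRingEnd ℂ) (x s.1 a₁' * u s.1 s.2 a₂')) *
      (z s.1 s.2 ℓ * (starRingEnd ℂ) (z s.1 s.2 ℓ')))).symm.trans ?_
  rfl
end
end

section
/- Let V_1, …, V_r be entanglement-breaking spaces with V_j ⊆ ℂ^m ⊗ ℂ^{n_j}, and let N = n_1 + ⋯ + n_r. For each j, embed ℂ^m ⊗ ℂ^{n_j} into ℂ^m ⊗ ℂ^N by the isometry ι_j that places the B-coordinates of a vector into the j-th block of ℂ^N = ℂ^{n_1} ⊕ ⋯ ⊕ ℂ^{n_r} and sets all other coordinates to zero. Then the B-direct sum ι_1(V_1) + ⋯ + ι_r(V_r) ⊆ ℂ^m ⊗ ℂ^N is an entanglement-breaking space. -/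
open scoped BigOperators ComplexOrder
open Kronecker

noncomputable section

lemma isSep_zero {A B : Type*} : IsSep (0 : Matrix (A × B) (A × B) ℂ) :=
  ⟨0, fun _ => 0, fun _ => 0, by simp⟩

lemma isSep_add {A B : Type*} {ρ σ : Matrix (A × B) (A × B) ℂ}
    (hρ : IsSep ρ) (hσ : IsSep σ) : IsSep (ρ + σ) := by
  obtain ⟨T1, x1, y1, rfl⟩ := hρ
  obtain ⟨T2, x2, y2, rfl⟩ := hσ
  refine ⟨T1 + T2, Fin.append x1 x2, Fin.append y1 y2, ?_⟩
  rw [Fin.sum_univ_add]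
  simp

lemma isSep_sum {A B : Type*} {ι : Type*} (s : Finset ι)
    (f : ι → Matrix (A × B) (A × B) ℂ) (h : ∀ i ∈ s, IsSep (f i)) :
    IsSep (∑ i ∈ s, f i) :=
  Finset.sum_induction f IsSep (fun _ _ => isSep_add) isSep_zero h

/-- The B-direct sum of finitely many EB spaces is EB. -/
theorem eb_bdirect_sum {r m : ℕ} (n : Fin r → ℕ)
    (V : ∀ j : Fin r, Submodule ℂ (Fin m × Fin (n j) → ℂ))
    (hV : ∀ j, IsEBSpace (V j)) :
    IsEBSpace (⨆ j : Fin r, Submodule.span ℂ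
      ((fun (v : Fin m × Fin (n j) → ℂ) =>
          (fun p : Fin m × ((j' : Fin r) × Fin (n j')) =>
            if h : p.2.1 = j then v (p.1, Fin.cast (congrArg n h) p.2.2) else 0))
        '' (V j : Set (Fin m × Fin (n j) → ℂ)))) := by
  intro k hk Ψ hΨ
  have hslice : ∀ (j : Fin r) (ℓ : Fin k),
      (fun ab : Fin m × Fin (n j) => Ψ (ab.1, ⟨j, ab.2⟩, ℓ)) ∈ V j := by
    intro j ℓ
    have key : (⨆ j' : Fin r, Submodule.span ℂ
        ((fun (v : Fin m × Fin (n j') → ℂ) =>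
            (fun p : Fin m × ((j'' : Fin r) × Fin (n j'')) =>
              if h : p.2.1 = j' then v (p.1, Fin.cast (congrArg n h) p.2.2) else 0))
          '' (V j' : Set (Fin m × Fin (n j') → ℂ)))) ≤
        Submodule.comap (LinearMap.funLeft ℂ ℂ
          (fun ab : Fin m × Fin (n j) => (ab.1, (⟨j, ab.2⟩ : (j'' : Fin r) × Fin (n j''))))) (V j) := by
      apply iSup_le
      intro j'
      rw [Submodule.span_le]
      rintro _ ⟨v, hv, rfl⟩
      simp only [Submodule.mem_comap, LinearMap.funLeft_apply, SetLike.mem_coe]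
      by_cases h : j' = j
      · subst h
        have heq : (LinearMap.funLeft ℂ ℂ
            (fun ab : Fin m × Fin (n j') =>
              ((ab.1, ⟨j', ab.2⟩) : Fin m × ((j'' : Fin r) × Fin (n j'')))))
            (fun p : Fin m × ((j'' : Fin r) × Fin (n j'')) =>
              if h : p.2.1 = j' then v (p.1, Fin.cast (congrArg n h) p.2.2) else 0) = v := by
          funext ab
          exact dif_pos rfl
        rw [heq]
        exact hv
      · have heq : (LinearMap.funLeft ℂ ℂ
            (fun ab : Fin m × Fin (n j) =>
              ((ab.1, ⟨j, ab.2⟩) : Fin m × ((j'' : Fin r) × Fin (n j'')))))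
            (fun p : Fin m × ((j'' : Fin r) × Fin (n j'')) =>
              if h : p.2.1 = j' then v (p.1, Fin.cast (congrArg n h) p.2.2) else 0) = 0 := by
          funext ab
          exact dif_neg fun hh : j = j' => h hh.symm
        rw [heq]
        exact (V j).zero_mem
    exact key (hΨ ℓ)
  have hdec : TrB Ψ = ∑ j : Fin r,
      TrB (fun p : Fin m × Fin (n j) × Fin k => Ψ (p.1, ⟨j, p.2.1⟩, p.2.2)) := by
    ext p q
    simp only [TrB, Matrix.sum_apply, Matrix.of_apply]
    rw [← Finset.univ_sigma_univ, Finset.sum_sigma]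
  rw [hdec]
  exact isSep_sum _ _ (fun j _ => hV j k hk _ (fun ℓ => hslice j ℓ))
end
end

section
/- Let V ⊆ ℂ^{m₁} ⊗ ℂ^{n₁} be a subspace that is NOT an entanglement-breaking space, and let W ⊆ ℂ^{m₂} ⊗ ℂ^{n₂} be any nonzero subspace. Define V ⊠ W ⊆ ℂ^{m₁m₂} ⊗ ℂ^{n₁n₂} as the span of the vectors ((a₁,a₂),(b₁,b₂)) ↦ v(a₁,b₁)·w(a₂,b₂) for v ∈ V and w ∈ W. Then V ⊠ W is not an entanglement-breaking space. -/
open scoped BigOperators ComplexOrder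
open Kronecker

noncomputable section

/-- If `V` is not EB and `W` is a nonzero subspace, then `V ⊠ W` is not EB. -/
theorem not_eb_tensor {m₁ n₁ m₂ n₂ : ℕ}
    (V : Submodule ℂ (Fin m₁ × Fin n₁ → ℂ)) (W : Submodule ℂ (Fin m₂ × Fin n₂ → ℂ))
    (hV : ¬ IsEBSpace V) (hW : W ≠ ⊥) :
    ¬ IsEBSpace (Submodule.span ℂ
      {u : (Fin m₁ × Fin m₂) × (Fin n₁ × Fin n₂) → ℂ |
        ∃ v ∈ V, ∃ w ∈ W, u = fun p => v (p.1.1, p.2.1) * w (p.1.2, p.2.2)}) := by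
  intro hEB
  apply hV
  intro k hk Ψ hΨ
  obtain ⟨w, hwW, hw0⟩ := (Submodule.ne_bot_iff W).mp hW
  obtain ⟨p₀, hp₀⟩ : ∃ p, w p ≠ 0 := by
    by_contra h; push_neg at h; exact hw0 (funext h)
  set a₀ := p₀.1 with ha₀
  set s : ℝ := ∑ b₂ : Fin n₂, Complex.normSq (w (a₀, b₂)) with hs_def
  have hs : 0 < s := by
    apply Finset.sum_pos' (fun i _ => Complex.normSq_nonneg _)
    exact ⟨p₀.2, Finset.mem_univ _, Complex.normSq_pos.mpr (by rwa [ha₀, Prod.mk.eta])⟩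
  set Ψ' : (Fin m₁ × Fin m₂) × (Fin n₁ × Fin n₂) × Fin k → ℂ :=
    fun p => Ψ (p.1.1, p.2.1.1, p.2.2) * w (p.1.2, p.2.1.2) with hΨ'
  have hslice : ∀ ℓ : Fin k,
      (fun ab : (Fin m₁ × Fin m₂) × (Fin n₁ × Fin n₂) => Ψ' (ab.1, ab.2, ℓ)) ∈
      Submodule.span ℂ
      {u : (Fin m₁ × Fin m₂) × (Fin n₁ × Fin n₂) → ℂ |
        ∃ v ∈ V, ∃ w ∈ W, u = fun p => v (p.1.1, p.2.1) * w (p.1.2, p.2.2)} := by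
    intro ℓ
    apply Submodule.subset_span
    exact ⟨fun ab => Ψ (ab.1, ab.2, ℓ), hΨ ℓ, w, hwW, rfl⟩
  obtain ⟨T, x, y, hxy⟩ := hEB k hk Ψ' hslice
  set r : ℂ := ((Real.sqrt s⁻¹ : ℝ) : ℂ) with hr
  have hr2 : r * (starRingEnd ℂ) r = (s : ℂ)⁻¹ := by
    rw [hr, Complex.conj_ofReal, ← Complex.ofReal_mul,
      Real.mul_self_sqrt (inv_nonneg.mpr hs.le), Complex.ofReal_inv]
  refine ⟨T, fun t a₁ => r * x t (a₁, a₀), y, ?_⟩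
  ext ⟨a, ℓ⟩ ⟨a', ℓ'⟩
  have key : TrB Ψ (a, ℓ) (a', ℓ') * (s : ℂ) = TrB Ψ' ((a, a₀), ℓ) ((a', a₀), ℓ') := by
    simp only [TrB, Matrix.of_apply, hΨ']
    rw [Fintype.sum_prod_type, Finset.sum_mul]
    apply Finset.sum_congr rfl
    intro b₁ _
    rw [hs_def, Complex.ofReal_sum, Finset.mul_sum]
    apply Finset.sum_congr rfl
    intro b₂ _
    simp only [map_mul, Complex.normSq_eq_conj_mul_self]
    ring
  have hΨval : TrB Ψ (a, ℓ) (a', ℓ') =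
      (s : ℂ)⁻¹ * TrB Ψ' ((a, a₀), ℓ) ((a', a₀), ℓ') := by
    rw [← key]
    field_simp
  rw [hΨval, hxy]
  simp only [Matrix.sum_apply, Matrix.of_apply, Finset.mul_sum]
  apply Finset.sum_congr rfl
  intro t _
  simp only [map_mul]
  rw [← hr2]
  ring
end
end
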